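/- The global function f_{S^r} of the sand automaton S^r is injective on all configurations, F-injective (injective on finite configurations), and P-injective (injective on periodic configurations). -/

import Mathlib

/-- The extended integers `ℤ ∪ {-∞, +∞}`. -/
abbrev EZ : Type := WithBot (WithTop ℤ)

/-- Embedding of `ℤ` into the extended integers. -/
def finVal (n : ℤ) : EZ := ((n : WithTop ℤ) : EZ)

/-- The integer value of a finite extended integer (`0` on `±∞`). -/
def valZ (x : EZ) : ℤ := WithBot.recBotCoe 0 (fun y => WithTop.recTopCoe 0 id y) x

/-- The measuring device `β_l^m`. -/
noncomputable def beta (l : ℕ) (m : ℤ) (n : EZ) : EZ :=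
  if finVal (m + (l : ℤ)) < n then ⊤
  else if n < finVal (m - (l : ℤ)) then ⊥
  else WithBot.map (WithTop.map (fun k => k - m)) n

/-- Reference height: the value of `x` if finite, `0` if `x = ±∞`. -/
def refH (x : EZ) : ℤ := if x = ⊥ ∨ x = ⊤ then 0 else valZ x

/-- One-dimensional sandpile configurations. -/
abbrev Config : Type := ℤ → EZ

/-- The neighborhood sequence `d_r^i(c)`: the `2r`-tuple of measured differences. -/
noncomputable def nbhd (r : ℕ) (c : Config) (i : ℤ) : Fin (2 * r) → EZ :=
  fun j => beta r (refH (c i))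
    (c (i + (if (j : ℕ) < r then ((j : ℕ) : ℤ) - (r : ℤ) else ((j : ℕ) : ℤ) - (r : ℤ) + 1)))

/-- The global function of the sand automaton of radius `r` with local rule `lam`. -/
noncomputable def globalF (r : ℕ) (lam : (Fin (2 * r) → EZ) → ℤ) (c : Config) : Config :=
  fun i => if c i = ⊥ ∨ c i = ⊤ then c i
    else finVal (valZ (c i) + lam (nbhd r c i))

/-- Finite configurations. -/
def FiniteConf (c : Config) : Prop := ∃ k : ℕ, ∀ i : ℤ, (k : ℤ) ≤ |i| → c i = finVal 0

/-- Periodic configurations. -/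
def PeriodicConf (c : Config) : Prop := ∃ p : ℤ, p ≠ 0 ∧ ∀ i : ℤ, c (i + p) = c i


/-- The local rule of the sand automaton `S^r`:
`λ_{S^r}(x,y) = -1` if `x = +∞ ∧ y ≠ -∞`, `+1` if `x ≠ +∞ ∧ y = -∞`, `0` otherwise. -/
def lamSr (v : Fin 2 → EZ) : ℤ :=
  if v 0 = ⊤ ∧ v 1 ≠ ⊥ then -1
  else if v 0 ≠ ⊤ ∧ v 1 = ⊥ then 1
  else 0

/-!
If `f c = f c'`, then `c` and `c'` have the same infinite sites, and at a finite site of heights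
`n`, `n'` we have `n + λ = n' + λ'` with `λ, λ' ∈ {-1, 0, 1}`, so `n - n' ≤ 2`. Since
`λ_{S^r}(x, y) = [y = -∞] - [x = +∞]` only compares a site with its two neighbours, a gap
`n - n' > 0` can only be compensated by a neighbour whose gap is strictly larger. Two such steps
give a gap of at least `3`, which is impossible.
-/

lemma finVal_lt_finVal {a b : ℤ} : finVal a < finVal b ↔ a < b := by simp [finVal]

lemma finVal_le_finVal {a b : ℤ} : finVal a ≤ finVal b ↔ a ≤ b := by simp [finVal]

lemma finVal_injective : Function.Injective finVal := fun a b h => by simpa [finVal] using h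

lemma finVal_ne_bot (a : ℤ) : finVal a ≠ ⊥ := by simp [finVal]

lemma finVal_ne_top (a : ℤ) : finVal a ≠ ⊤ := by simp [finVal]

lemma EZ.eq_bot_or_eq_top_or_eq_finVal (x : EZ) : x = ⊥ ∨ x = ⊤ ∨ ∃ n, x = finVal n := by
  induction x using WithBot.recBotCoe with
  | bot => exact .inl rfl
  | coe y =>
    induction y using WithTop.recTopCoe with
    | top => exact .inr (.inl rfl)
    | coe n => exact .inr (.inr ⟨n, rfl⟩)

lemma beta_one_eq_top {n : ℤ} {x : EZ} : beta 1 n x = ⊤ ↔ finVal (n + 1) < x := by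
  rcases x.eq_bot_or_eq_top_or_eq_finVal with rfl | rfl | ⟨k, rfl⟩
  · simp [beta, finVal]
  · simp [beta, (finVal_ne_top _).lt_top]
  · simp only [beta, Nat.cast_one, finVal_lt_finVal]
    split_ifs <;> simp_all [finVal]

lemma beta_one_eq_bot {n : ℤ} {x : EZ} : beta 1 n x = ⊥ ↔ x < finVal (n - 1) := by
  rcases x.eq_bot_or_eq_top_or_eq_finVal with rfl | rfl | ⟨k, rfl⟩
  · simp [beta, finVal]
  · simp [beta, (finVal_ne_top _).lt_top]
  · simp only [beta, Nat.cast_one, finVal_lt_finVal]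
    split_ifs <;> simp_all [finVal]; omega

lemma lamSr_eq_sub (v : Fin 2 → EZ) :
    lamSr v = (if v 1 = ⊥ then 1 else 0) - (if v 0 = ⊤ then 1 else 0) := by
  unfold lamSr
  split_ifs <;> simp_all

lemma nbhd_one_zero (c : Config) (i : ℤ) : nbhd 1 c i 0 = beta 1 (refH (c i)) (c (i - 1)) := by
  simp [nbhd, sub_eq_add_neg]

lemma nbhd_one_one (c : Config) (i : ℤ) : nbhd 1 c i 1 = beta 1 (refH (c i)) (c (i + 1)) := by
  simp [nbhd]

lemma refH_finVal (n : ℤ) : refH (finVal n) = n := by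
  simp [refH, valZ, finVal]

lemma globalF_eq_bot_iff (r : ℕ) (lam : (Fin (2 * r) → EZ) → ℤ) (c : Config) (i : ℤ) :
    globalF r lam c i = ⊥ ↔ c i = ⊥ := by
  unfold globalF
  split_ifs with h
  · rfl
  · simp_all [finVal_ne_bot]

lemma globalF_eq_top_iff (r : ℕ) (lam : (Fin (2 * r) → EZ) → ℤ) (c : Config) (i : ℤ) :
    globalF r lam c i = ⊤ ↔ c i = ⊤ := by
  unfold globalF
  split_ifs with h
  · rfl
  · simp_all [finVal_ne_top]

section GlobalEq

variable {r : ℕ} {lam : (Fin (2 * r) → EZ) → ℤ} {c c' : Config}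
  (hf : globalF r lam c = globalF r lam c')
include hf

lemma eq_bot_iff_of_globalF_eq (j : ℤ) : c j = ⊥ ↔ c' j = ⊥ := by
  rw [← globalF_eq_bot_iff r lam, hf, globalF_eq_bot_iff]

lemma eq_top_iff_of_globalF_eq (j : ℤ) : c j = ⊤ ↔ c' j = ⊤ := by
  rw [← globalF_eq_top_iff r lam, hf, globalF_eq_top_iff]

lemma exists_finVal_of_globalF_eq {j : ℤ} (hb : c j ≠ ⊥) (ht : c' j ≠ ⊤) :
    ∃ m m', c j = finVal m ∧ c' j = finVal m' := by
  have hb' : c' j ≠ ⊥ := (eq_bot_iff_of_globalF_eq hf j).not.1 hb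
  have ht' : c j ≠ ⊤ := (eq_top_iff_of_globalF_eq hf j).not.2 ht
  rcases (c j).eq_bot_or_eq_top_or_eq_finVal with h | h | ⟨m, hm⟩ <;> try contradiction
  rcases (c' j).eq_bot_or_eq_top_or_eq_finVal with h | h | ⟨m', hm'⟩ <;> try contradiction
  exact ⟨m, m', hm, hm'⟩

end GlobalEq

noncomputable def srNext (a : EZ) (n : ℤ) (b : EZ) : ℤ :=
  n + (if b < finVal (n - 1) then 1 else 0) - (if finVal (n + 1) < a then 1 else 0)

lemma globalF_lamSr_of_eq_finVal {c : Config} {i n : ℤ} (h : c i = finVal n) :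
    globalF 1 lamSr c i = finVal (srNext (c (i - 1)) n (c (i + 1))) := by
  rw [globalF, if_neg (by simp [h, finVal_ne_bot, finVal_ne_top]), lamSr_eq_sub, nbhd_one_zero,
    nbhd_one_one, h, refH_finVal]
  simp only [beta_one_eq_top, beta_one_eq_bot, srNext, add_sub_assoc]
  rfl

lemma sub_le_two_of_srNext_eq {a b a' b' : EZ} {n n' : ℤ}
    (h : srNext a n b = srNext a' n' b') : n - n' ≤ 2 := by
  unfold srNext at h
  split_ifs at h <;> omega

lemma srNext_eq_of_lt {a b a' b' : EZ} {n n' : ℤ}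
    (h : srNext a n b = srNext a' n' b') (hlt : n' < n) :
    (finVal (n + 1) < a ∧ a' ≤ finVal (n' + 1)) ∨
      (finVal (n - 1) ≤ b ∧ b' < finVal (n' - 1)) := by
  simp only [← not_lt]
  unfold srNext at h
  split_ifs at h <;> first | omega | tauto

section LamSrEq

variable {c c' : Config} (hf : globalF 1 lamSr c = globalF 1 lamSr c')
include hf

lemma sub_le_two_of_globalF_lamSr_eq {i n n' : ℤ} (hn : c i = finVal n)
    (hn' : c' i = finVal n') : n - n' ≤ 2 := by
  have h := congrFun hf i
  rw [globalF_lamSr_of_eq_finVal hn, globalF_lamSr_of_eq_finVal hn'] at h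
  exact sub_le_two_of_srNext_eq (finVal_injective h)

lemma exists_gap_gt_of_globalF_lamSr_eq {i n n' : ℤ} (hn : c i = finVal n)
    (hn' : c' i = finVal n') (hlt : n' < n) :
    ∃ j m m', c j = finVal m ∧ c' j = finVal m' ∧ n - n' < m - m' := by
  have h := congrFun hf i
  rw [globalF_lamSr_of_eq_finVal hn, globalF_lamSr_of_eq_finVal hn'] at h
  rcases srNext_eq_of_lt (finVal_injective h) hlt with ⟨ha, ha'⟩ | ⟨hb, hb'⟩
  · obtain ⟨m, m', hm, hm'⟩ := exists_finVal_of_globalF_eq hf (j := i - 1)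
      (ne_bot_of_gt ha) (ne_top_of_le_ne_top (finVal_ne_top _) ha')
    rw [hm, finVal_lt_finVal] at ha
    rw [hm', finVal_le_finVal] at ha'
    exact ⟨i - 1, m, m', hm, hm', by omega⟩
  · obtain ⟨m, m', hm, hm'⟩ := exists_finVal_of_globalF_eq hf (j := i + 1)
      (ne_bot_of_le_ne_bot (finVal_ne_bot _) hb) (ne_top_of_lt hb')
    rw [hm, finVal_le_finVal] at hb
    rw [hm', finVal_lt_finVal] at hb'
    exact ⟨i + 1, m, m', hm, hm', by omega⟩

lemma le_of_globalF_lamSr_eq {i n n' : ℤ} (hn : c i = finVal n) (hn' : c' i = finVal n') :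
    n ≤ n' := by
  by_contra! hlt
  obtain ⟨j, m, m', hm, hm', hgap⟩ := exists_gap_gt_of_globalF_lamSr_eq hf hn hn' hlt
  obtain ⟨k, l, l', hl, hl', hgap'⟩ :=
    exists_gap_gt_of_globalF_lamSr_eq hf hm hm' (by omega)
  have := sub_le_two_of_globalF_lamSr_eq hf hl hl'
  omega

end LamSrEq

lemma globalF_lamSr_injective : Function.Injective (globalF 1 lamSr) := by
  intro c c' hf
  funext i
  rcases (c i).eq_bot_or_eq_top_or_eq_finVal with h | h | ⟨n, hn⟩
  · rw [h, (eq_bot_iff_of_globalF_eq hf i).1 h]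
  · rw [h, (eq_top_iff_of_globalF_eq hf i).1 h]
  · obtain ⟨-, n', -, hn'⟩ := exists_finVal_of_globalF_eq hf (hn ▸ finVal_ne_bot n)
      ((eq_top_iff_of_globalF_eq hf i).not.1 (hn ▸ finVal_ne_top n))
    rw [hn, hn',
      le_antisymm (le_of_globalF_lamSr_eq hf hn hn') (le_of_globalF_lamSr_eq hf.symm hn' hn)]

/-- `f_{S^r}` is injective, `F`-injective and `P`-injective. -/
theorem Sr_injective :
    Function.Injective (globalF 1 lamSr) ∧
    Set.InjOn (globalF 1 lamSr) {c : Config | FiniteConf c} ∧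
    Set.InjOn (globalF 1 lamSr) {c : Config | PeriodicConf c} :=
  ⟨globalF_lamSr_injective, globalF_lamSr_injective.injOn, globalF_lamSr_injective.injOn⟩
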